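/- arXiv:2305.06922 — 2 statements merged into one kernel-verified Lean document; each statement's English description precedes it below -/
import Mathlib

section
/- In the lattice Λ_{1,6} with h² = 1, e_i² = -1, and mixed products 0, the number of classes ℓ with ℓ² = -1 and ℓ·k = -1 (where k = -3h + e_1 + ... + e_6) is exactly 27. -/
/-- The signature `(1,m)` bilinear form on `Λ_{1,m} = ℤ^{m+1}`. -/
def lambdaForm {m : ℕ} (x y : Fin (m + 1) → ℤ) : ℤ :=
  x 0 * y 0 - ∑ i : Fin m, x i.succ * y i.succ

/-- `k = -3h + e_1 + ⋯ + e_m`. -/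
def kvec (m : ℕ) : Fin (m + 1) → ℤ := Fin.cons (-3) (fun _ => 1)

/-- The line classes in `Λ_{1,m}`: `ℓ² = -1` and `ℓ·k = -1`. -/
def lineClasses (m : ℕ) : Set (Fin (m + 1) → ℤ) :=
  {l | lambdaForm l l = -1 ∧ lambdaForm l (kvec m) = -1}

namespace CardLineAux

/-- The vector `a·h + c·∑_{i∈T} e_i` (in coordinates). -/
def vec (a c : ℤ) (T : Finset (Fin 6)) : Fin 7 → ℤ :=
  Fin.cons a (fun i => if i ∈ T then c else 0)

lemma vec_inj (a : ℤ) {c : ℤ} (hc : c ≠ 0) : Function.Injective (vec a c) := by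
  intro T T' h
  ext i
  have h2 := congrFun h i.succ
  simp only [vec, Fin.cons_succ] at h2
  split_ifs at h2 <;> simp_all

/-- Family of such vectors indexed by subsets of size `k`. -/
def fam (a c : ℤ) (k : ℕ) : Finset (Fin 7 → ℤ) :=
  ((Finset.univ : Finset (Fin 6)).powersetCard k).image (vec a c)

lemma card_fam (a : ℤ) {c : ℤ} (hc : c ≠ 0) (k : ℕ) :
    (fam a c k).card = Nat.choose 6 k := by
  rw [fam, Finset.card_image_of_injective _ (vec_inj a hc),
    Finset.card_powersetCard, Finset.card_univ, Fintype.card_fin]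

lemma fam_apply_zero {a c : ℤ} {k : ℕ} {x : Fin 7 → ℤ} (hx : x ∈ fam a c k) :
    x 0 = a := by
  obtain ⟨T, -, rfl⟩ := Finset.mem_image.mp hx
  simp [vec]

lemma sum_vec_mul (c : ℤ) (T : Finset (Fin 6)) :
    ∑ i : Fin 6, (vec 0 c T) i.succ * (vec 0 c T) i.succ = (T.card : ℤ) * (c * c) := by
  simp only [vec, Fin.cons_succ]
  rw [Finset.sum_congr rfl (fun i _ => by split_ifs <;> ring :
    ∀ i ∈ Finset.univ, (if i ∈ T then c else 0) * (if i ∈ T then c else 0)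
      = if i ∈ T then c * c else 0)]
  rw [Finset.sum_ite_mem, Finset.univ_inter, Finset.sum_const, nsmul_eq_mul]

lemma sum_vec (c : ℤ) (T : Finset (Fin 6)) :
    ∑ i : Fin 6, (vec 0 c T) i.succ = (T.card : ℤ) * c := by
  simp only [vec, Fin.cons_succ]
  rw [Finset.sum_ite_mem, Finset.univ_inter, Finset.sum_const, nsmul_eq_mul]

lemma vec_succ_eq (a a' c : ℤ) (T : Finset (Fin 6)) (i : Fin 6) :
    (vec a c T) i.succ = (vec a' c T) i.succ := by simp [vec]

lemma mem_lineClasses {a c : ℤ} {k : ℕ} {x : Fin 7 → ℤ} (hx : x ∈ fam a c k)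
    (h1 : a * a - (k : ℤ) * (c * c) = -1) (h2 : a * (-3) - (k : ℤ) * c = -1) :
    x ∈ lineClasses 6 := by
  obtain ⟨T, hT, rfl⟩ := Finset.mem_image.mp hx
  rw [Finset.mem_powersetCard_univ] at hT
  have hz : vec a c T 0 = a := by simp [vec]
  have e1 : ∑ i : Fin 6, (vec a c T) i.succ * (vec a c T) i.succ = (k : ℤ) * (c * c) := by
    rw [Finset.sum_congr rfl (fun i _ => by rw [vec_succ_eq a 0 c T i]), sum_vec_mul, hT]
  have e2 : ∑ i : Fin 6, (vec a c T) i.succ = (k : ℤ) * c := by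
    rw [Finset.sum_congr rfl (fun i _ => vec_succ_eq a 0 c T i), sum_vec, hT]
  constructor
  · show lambdaForm _ _ = -1
    rw [lambdaForm, hz, e1, h1]
  · show lambdaForm _ _ = -1
    rw [lambdaForm, hz]
    have e3 : ∀ i ∈ (Finset.univ : Finset (Fin 6)),
        vec a c T i.succ * kvec 6 i.succ = vec a c T i.succ := fun i _ => by
      simp [kvec, Fin.cons_succ]
    rw [Finset.sum_congr rfl e3, e2]
    have : kvec 6 0 = -3 := rfl
    rw [this, h2]

lemma forward_case {l : Fin 7 → ℤ} (a c : ℤ) (k : ℕ) (ha : l 0 = a)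
    (hb : ∀ i : Fin 6, l i.succ = 0 ∨ l i.succ = c)
    (hsum : ∑ i : Fin 6, l i.succ = (k : ℤ) * c) (hc0 : c ≠ 0) :
    l ∈ fam a c k := by
  classical
  set T : Finset (Fin 6) := Finset.univ.filter (fun i => l i.succ = c) with hT
  have hlv : l = vec a c T := by
    funext j
    refine Fin.cases ?_ ?_ j
    · simpa [vec] using ha
    · intro i
      simp only [vec, Fin.cons_succ, hT, Finset.mem_filter, Finset.mem_univ, true_and]
      rcases hb i with h | h <;> simp [h, hc0, Ne.symm hc0]
  have hsum' : ∑ i : Fin 6, l i.succ = (T.card : ℤ) * c := by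
    rw [hlv, Finset.sum_congr rfl (fun i _ => vec_succ_eq a 0 c T i), sum_vec]
  have hcard : (T.card : ℤ) = (k : ℤ) := by
    have := hsum'.symm.trans hsum
    exact mul_right_cancel₀ hc0 this
  rw [hlv]
  exact Finset.mem_image_of_mem _ (Finset.mem_powersetCard_univ.mpr (by exact_mod_cast hcard))

/-- The explicit 27-element set. -/
def L : Finset (Fin 7 → ℤ) := fam 0 1 1 ∪ fam 1 (-1) 2 ∪ fam 2 (-1) 5

lemma lineClasses_eq : lineClasses 6 = (L : Set (Fin 7 → ℤ)) := by
  ext l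
  simp only [Finset.coe_union, Set.mem_union, Finset.mem_coe, L]
  constructor
  · rintro ⟨h1, h2⟩
    rw [lambdaForm] at h1 h2
    simp only [kvec, Fin.cons_zero, Fin.cons_succ, mul_one] at h2
    set a := l 0 with ha
    set S1 := ∑ i : Fin 6, l i.succ with hS1
    set S2 := ∑ i : Fin 6, l i.succ * l i.succ with hS2
    -- Cauchy-Schwarz bound
    have hcs : S1 ^ 2 ≤ 6 * S2 := by
      have := sq_sum_le_card_mul_sum_sq (s := (Finset.univ : Finset (Fin 6)))
        (f := fun i => l i.succ)
      simp only [Finset.card_univ, Fintype.card_fin] at this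
      have hsq : ∑ i : Fin 6, l i.succ ^ 2 = S2 := by
        rw [hS2]; exact Finset.sum_congr rfl fun i _ => by ring
      calc S1 ^ 2 ≤ 6 * ∑ i : Fin 6, l i.succ ^ 2 := by exact_mod_cast this
        _ = 6 * S2 := by rw [hsq]
    have hS1v : S1 = 1 - 3 * a := by linarith
    have hS2v : S2 = a * a + 1 := by linarith
    obtain ⟨hb0, hb2⟩ : 0 ≤ a ∧ a ≤ 2 := by
      rw [hS1v, hS2v] at hcs
      constructor <;> nlinarith
    -- helper for splitting b i values
    have key : ∀ c : ℤ, c ≠ 0 → (∀ i : Fin 6, 0 ≤ l i.succ * l i.succ - c * l i.succ) →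
        (∑ i : Fin 6, (l i.succ * l i.succ - c * l i.succ)) = 0 →
        ∀ i : Fin 6, l i.succ = 0 ∨ l i.succ = c := by
      intro c hc hpos hzero i
      have h0 := (Finset.sum_eq_zero_iff_of_nonneg (fun i _ => hpos i)).mp hzero i
        (Finset.mem_univ i)
      have : l i.succ * (l i.succ - c) = 0 := by linarith [h0]
      rcases mul_eq_zero.mp this with h | h
      · exact Or.inl h
      · exact Or.inr (by linarith)
    interval_cases a
    · -- a = 0 : one coordinate 1
      left; left
      refine forward_case 0 1 1 ha.symm ?_ (by push_cast; linarith) one_ne_zero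
      refine key 1 one_ne_zero (fun i => ?_) (by rw [Finset.sum_sub_distrib, ← Finset.mul_sum, ← hS1, ← hS2]; linarith)
      nlinarith [mul_self_nonneg (l i.succ), mul_self_nonneg (l i.succ - 1)]
    · -- a = 1 : two coordinates -1
      left; right
      refine forward_case 1 (-1) 2 ha.symm ?_ (by push_cast; linarith) (by norm_num)
      refine key (-1) (by norm_num) (fun i => ?_) (by rw [Finset.sum_sub_distrib, ← Finset.mul_sum, ← hS1, ← hS2]; linarith)
      nlinarith [mul_self_nonneg (l i.succ), mul_self_nonneg (l i.succ + 1)]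
    · -- a = 2 : five coordinates -1
      right
      refine forward_case 2 (-1) 5 ha.symm ?_ (by push_cast; linarith) (by norm_num)
      refine key (-1) (by norm_num) (fun i => ?_) (by rw [Finset.sum_sub_distrib, ← Finset.mul_sum, ← hS1, ← hS2]; linarith)
      nlinarith [mul_self_nonneg (l i.succ), mul_self_nonneg (l i.succ + 1)]
  · rintro ((h | h) | h)
    · exact mem_lineClasses h (by norm_num) (by norm_num)
    · exact mem_lineClasses h (by norm_num) (by norm_num)
    · exact mem_lineClasses h (by norm_num) (by norm_num)

lemma card_L : L.card = 27 := by
  have d1 : Disjoint (fam (0:ℤ) 1 1) (fam 1 (-1) 2) := by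
    rw [Finset.disjoint_left]
    intro x hx hx'
    have := (fam_apply_zero hx).symm.trans (fam_apply_zero hx')
    norm_num at this
  have d2 : Disjoint (fam (0:ℤ) 1 1 ∪ fam 1 (-1) 2) (fam 2 (-1) 5) := by
    rw [Finset.disjoint_left]
    intro x hx hx'
    rcases Finset.mem_union.mp hx with h | h <;>
      · have := (fam_apply_zero h).symm.trans (fam_apply_zero hx')
        norm_num at this
  rw [L, Finset.card_union_of_disjoint d2, Finset.card_union_of_disjoint d1,
    card_fam _ one_ne_zero, card_fam _ (by norm_num : (-1:ℤ) ≠ 0),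
    card_fam _ (by norm_num : (-1:ℤ) ≠ 0)]
  decide

end CardLineAux

/-- `Λ_{1,6}` contains exactly 27 classes `ℓ` with `ℓ² = -1`, `ℓ·k = -1`. -/
theorem card_lineClasses_six : (lineClasses 6).ncard = 27 := by
  rw [CardLineAux.lineClasses_eq, Set.ncard_coe_finset, CardLineAux.card_L]
end

section
/- For c in the interval (1/2, 1], the ℚ-divisor class (-1+2c)h_1 + (-1+2c)h_2 on ℙ¹×ℙ¹ and the class (-1+4c)h_1 + (-1+4c)h_2 + (-1+2c)(e_1+...+e_4) on Bl_4(ℙ¹×ℙ¹) (4 points on the diagonal) are both ample; hence the weight-1 stable degree-4 del Pezzo degenerations remain stable for all c in (1/2, 1], and c = 1/2 is the unique wall in (1/4, 1] arising from these fibers. -/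
/-- A class `a·h₁ + b·h₂` on `ℙ¹ × ℙ¹` is ample iff `a > 0` and `b > 0`. -/
def IsAmpleF0 (a b : ℚ) : Prop := 0 < a ∧ 0 < b

/-- The class `(-1+4c)h₁ + (-1+4c)h₂ + (-1+2c)(e₁+⋯+e₄)` on `Bl₄(ℙ¹×ℙ¹)` (4 points on
the diagonal), as its coefficient vector `(h₁, h₂, e₁, …, e₄)`. -/
def DBl4 (c : ℚ) : Fin 6 → ℚ :=
  ![-1 + 4*c, -1 + 4*c, -1 + 2*c, -1 + 2*c, -1 + 2*c, -1 + 2*c]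

/-- Ampleness of a class on `Bl₄(ℙ¹×ℙ¹)` via Nakai–Moishezon: positive intersection with
the curve classes `h₁`, `h₂`, `e_i`, `h₁ - e_i`, `h₂ - e_i`, `h₁ + h₂ - e_i - e_j`
(`D·h_j` is the `h_j`-coefficient, `D·e_i` the `e_i`-coefficient). -/
def IsAmpleBl4 (D : Fin 6 → ℚ) : Prop :=
  0 < D 0 ∧ 0 < D 1 ∧
  (∀ i : Fin 4, 0 < D i.succ.succ) ∧
  (∀ i : Fin 4, 0 < D 0 - D i.succ.succ) ∧
  (∀ i : Fin 4, 0 < D 1 - D i.succ.succ) ∧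
  (∀ i j : Fin 4, i ≠ j → 0 < D 0 + D 1 - D i.succ.succ - D j.succ.succ)

/-- for `c ∈ (1/4, 1]`, the class `(-1+2c)h₁ + (-1+2c)h₂` on `ℙ¹×ℙ¹` and
the class `(-1+4c)h₁ + (-1+4c)h₂ + (-1+2c)(e₁+⋯+e₄)` on `Bl₄(ℙ¹×ℙ¹)` are both ample
iff `c > 1/2`; in particular they are ample for all `c ∈ (1/2, 1]`, so `c = 1/2` is the
unique wall in `(1/4, 1]` arising from these fibers. -/
theorem wall_at_one_half (c : ℚ) (hc1 : 1/4 < c) (hc2 : c ≤ 1) :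
    (IsAmpleF0 (-1 + 2*c) (-1 + 2*c) ∧ IsAmpleBl4 (DBl4 c)) ↔ 1/2 < c := by
  have key : ∀ i : Fin 4, DBl4 c i.succ.succ = -1 + 2*c := by
    intro i; fin_cases i <;> rfl
  have h0 : DBl4 c 0 = -1 + 4*c := rfl
  have h1 : DBl4 c 1 = -1 + 4*c := rfl
  constructor
  · rintro ⟨⟨h, -⟩, -⟩
    linarith
  · intro h
    exact ⟨⟨by linarith, by linarith⟩,
      by rw [h0]; linarith,
      by rw [h1]; linarith,
      fun i => by rw [key]; linarith,
      fun i => by rw [h0, key]; linarith,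
      fun i => by rw [h1, key]; linarith,
      fun i j _ => by rw [h0, h1, key, key]; linarith⟩
end
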